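/- arXiv:1201.1731 — 2 statements merged into one kernel-verified Lean document; each statement's English description precedes it below -/
import Mathlib

section
/- On the set H¹(X,ℤ₂) × H³(X,ℤ) of stable isomorphism classes of graded gerbes on a space X, the product (a,h)(b,k) = (a+b, h+k+β(a ⌣ b)), where β : H²(X,ℤ₂) → H³(X,ℤ) is the Bockstein homomorphism and ⌣ is the cup product, defines an abelian group structure. -/
/-!
STATEMENT 4: On `H¹(X,ℤ₂) × H³(X,ℤ)` (stable isomorphism classes of graded
gerbes on `X`), the product `(a,h)(b,k) = (a+b, h+k+β(a⌣b))` defines an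
abelian group structure.

We model the cohomology groups abstractly: `G₁ = H¹(X,ℤ₂)` and `H₂ = H²(X,ℤ₂)`
are abelian groups in which every element is 2-torsion, `G₂ = H³(X,ℤ)` is an
abelian group, `cup` is the (bilinear, symmetric on degree-one ℤ₂-classes)
cup product, and `β : H²(X,ℤ₂) → H³(X,ℤ)` is the Bockstein homomorphism
(whose image is 2-torsion).
-/

theorem graded_gerbe_classes_form_abelian_group
    {G₁ H₂ G₂ : Type*} [AddCommGroup G₁] [AddCommGroup H₂] [AddCommGroup G₂]
    -- ℤ₂-coefficients: every element of `H¹(X,ℤ₂)` and `H²(X,ℤ₂)` is 2-torsion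
    (h2tor₁ : ∀ a : G₁, a + a = 0) (h2tor₂ : ∀ z : H₂, z + z = 0)
    -- the cup product `H¹(X,ℤ₂) × H¹(X,ℤ₂) → H²(X,ℤ₂)`: bilinear and symmetric
    (cup : G₁ →+ G₁ →+ H₂)
    (hcupsymm : ∀ a b : G₁, cup a b = cup b a)
    -- the Bockstein homomorphism `β : H²(X,ℤ₂) → H³(X,ℤ)`
    (β : H₂ →+ G₂)
    -- the product on `H¹(X,ℤ₂) × H³(X,ℤ)`
    (mul : G₁ × G₂ → G₁ × G₂ → G₁ × G₂)
    (hmul : ∀ p q : G₁ × G₂,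
      mul p q = (p.1 + q.1, p.2 + q.2 + β (cup p.1 q.1))) :
    (∀ p q r, mul (mul p q) r = mul p (mul q r)) ∧
    (∀ p q, mul p q = mul q p) ∧
    (∀ p, mul (0, 0) p = p) ∧
    (∀ p, ∃ q, mul p q = ((0 : G₁), (0 : G₂))) := by
  refine ⟨?_, ?_, ?_, ?_⟩
  · intro p q r
    simp only [hmul, map_add, AddMonoidHom.add_apply]
    refine Prod.ext (by simp [add_assoc]) ?_
    simp only
    abel
  · intro p q
    simp only [hmul]
    refine Prod.ext (by simp [add_comm]) ?_
    simp only [hcupsymm p.1 q.1]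
    abel
  · intro p
    simp [hmul]
  · intro p
    refine ⟨(p.1, -p.2 - β (cup p.1 p.1)), ?_⟩
    simp only [hmul]
    refine Prod.ext (h2tor₁ p.1) ?_
    simp only
    abel
end

section
/- Let π : X → M, π̂ : X̂ → M be affine torus bundles with dual vertical bundles V, V* and connections A ∈ Ω¹(X,π*V), Â ∈ Ω¹(X̂,π̂*V*) with curvatures F ∈ Ω²(M,V), F̂ ∈ Ω²(M,V*). On the fiber product C = X ×_M X̂ with projections p, p̂, q, set 𝓑 = (p*A ∧, p̂*Â) (the dual pairing of the V- and V*-valued 1-forms). If H = π*(H₃) + (A ∧, π*F̂) and Ĥ = π̂*(H₃) + (Â ∧, π̂*F) for some H₃ ∈ Ω³(M), then p̂*(Ĥ) − p*(H) = d𝓑. -/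
/-!
STATEMENT 17: Let `π : X → M`, `π̂ : X̂ → M` be affine torus bundles with dual
vertical bundles `V`, `V*`, connections `A`, `Â` with curvatures `F`, `F̂`.
On the correspondence space `C = X ×_M X̂` set `𝓑 = (p*A ∧, p̂*Â)`.  If
`H = π*(H₃) + (A ∧, π*F̂)` and `Ĥ = π̂*(H₃) + (Â ∧, π̂*F)` then
`p̂*(Ĥ) − p*(H) = d𝓑`.

We model the algebras of forms on `X`, `X̂`, `M`, `C` abstractly, with the
pullback maps `πX = π*`, `πXh = π̂*`, `pX = p*`, `pXh = p̂*` as algebra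
homomorphisms commuting with the exterior derivatives and satisfying
`p* ∘ π* = p̂* ∘ π̂*` (= `q*`).  The `V`- and `V*`-valued forms `A`, `Â`, `F`,
`F̂` are expressed through their components in a flat frame, and the dual
pairing `( ∧, )` becomes the sum of products of components.  On `Ω*(C)` we
record the graded structure (Leibniz rule and graded commutativity).
-/

theorem correspondence_space_H_difference_is_exact
    -- forms on the correspondence space C, with grading
    {ΩC : Type*} [Ring ΩC] [Algebra ℝ ΩC]
    (AC : ℕ → Submodule ℝ ΩC) [GradedAlgebra AC]
    (dC : ΩC →ₗ[ℝ] ΩC)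
    (hleibC : ∀ m, ∀ x ∈ AC m, ∀ y : ΩC,
      dC (x * y) = dC x * y + ((-1 : ℝ) ^ m) • (x * dC y))
    (hcommC : ∀ m n, ∀ x ∈ AC m, ∀ y ∈ AC n,
      x * y = ((-1 : ℝ) ^ (m * n)) • (y * x))
    -- forms on X, X̂ and M with exterior derivatives
    {ΩX ΩXh ΩM : Type*} [Ring ΩX] [Algebra ℝ ΩX] [Ring ΩXh] [Algebra ℝ ΩXh]
    [Ring ΩM] [Algebra ℝ ΩM]
    (dX : ΩX →ₗ[ℝ] ΩX) (dXh : ΩXh →ₗ[ℝ] ΩXh)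
    -- pullback maps
    (pX : ΩX →ₐ[ℝ] ΩC) (pXh : ΩXh →ₐ[ℝ] ΩC)
    (πX : ΩM →ₐ[ℝ] ΩX) (πXh : ΩM →ₐ[ℝ] ΩXh)
    -- the commuting square `p ∘ π = p̂ ∘ π̂ (= q)` of the fiber product
    (hsquare : ∀ x : ΩM, pX (πX x) = pXh (πXh x))
    -- pullbacks commute with exterior derivatives
    (hdpX : ∀ x : ΩX, dC (pX x) = pX (dX x))
    (hdpXh : ∀ x : ΩXh, dC (pXh x) = pXh (dXh x))
    -- rank of the torus bundles; components of `A`, `Â`, `F`, `F̂`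
    (n : ℕ) (A : Fin n → ΩX) (Ah : Fin n → ΩXh) (F Fh : Fin n → ΩM)
    -- degrees: `A`, `Â` are 1-forms and `F`, `F̂` are 2-forms
    (hdegA : ∀ i, pX (A i) ∈ AC 1) (hdegAh : ∀ i, pXh (Ah i) ∈ AC 1)
    (hdegF : ∀ i, pX (πX (F i)) ∈ AC 2)
    (hdegFh : ∀ i, pX (πX (Fh i)) ∈ AC 2)
    -- curvature equations `d_∇ A = π*F`, `d_∇ Â = π̂*F̂` (componentwise)
    (hcurvA : ∀ i, dX (A i) = πX (F i))
    (hcurvAh : ∀ i, dXh (Ah i) = πXh (Fh i))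
    -- the 3-forms `H`, `Ĥ` and the 2-form `𝓑`
    (H₃ : ΩM) (H : ΩX) (Hh : ΩXh) (B : ΩC)
    (hH : H = πX H₃ + ∑ i : Fin n, A i * πX (Fh i))
    (hHh : Hh = πXh H₃ + ∑ i : Fin n, Ah i * πXh (F i))
    (hB : B = ∑ i : Fin n, pX (A i) * pXh (Ah i)) :
    pXh Hh - pX H = dC B := by
  subst hH hHh hB
  have key : ∀ i : Fin n, dC (pX (A i) * pXh (Ah i))
      = pXh (Ah i) * pXh (πXh (F i)) - pX (A i) * pX (πX (Fh i)) := by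
    intro i
    rw [hleibC 1 _ (hdegA i), hdpX, hcurvA i, hdpXh, hcurvAh i,
        hcommC 2 1 _ (hdegF i) _ (hdegAh i)]
    rw [hsquare (F i), hsquare (Fh i)]
    simp [sub_eq_add_neg]
  rw [map_sum]
  simp only [key, map_add, map_sum, hsquare H₃]
  rw [Finset.sum_sub_distrib]
  simp only [map_mul, hsquare]
  abel
end
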